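/- Let G : 𝓟(𝕋^d) → ℝ and define Ĝ : M → ℝ by Ĝ(ψ) = G(π_♯ ψ_♯ 𝓛^d). Suppose G is strongly differentiable at μ̃ ∈ 𝓟(𝕋^d), let μ ∈ 𝓟₂(ℝ^d) with π_♯μ = μ̃ and let ψ ∈ M with ψ_♯𝓛^d = μ. Then Ĝ is Fréchet differentiable at ψ∘h + z for every (h,z) ∈ H × L²_ℤ, and DĜ(ψ∘h + z) = DĜ(ψ)∘h. -/

import Mathlib

open MeasureTheory Set Filter Topology
open scoped ENNReal RealInnerProductSpace

noncomputable section

namespace MFG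

instance : Fact ((0:ℝ) < 1) := ⟨zero_lt_one⟩

/-- `ℝ^d` as a Euclidean (inner-product) space. -/
abbrev Rd (d : ℕ) := EuclideanSpace ℝ (Fin d)

/-- The half-open unit cube `[0,1)^d`. -/
def cube (d : ℕ) : Set (Rd d) := {x | ∀ i, 0 ≤ x i ∧ x i < 1}

/-- Lebesgue measure restricted to the cube `[0,1)^d`. -/
def cubeMeasure (d : ℕ) : Measure (Rd d) := volume.restrict (cube d)

/-- `M = L²([0,1)^d, ℝ^d)`. -/
abbrev Mspace (d : ℕ) := Lp (α := Rd d) (Rd d) 2 (cubeMeasure d)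

/-- The vector of `ℝ^d` with integer coordinates `z`. -/
def intVec {d : ℕ} (z : Fin d → ℤ) : Rd d :=
  (EuclideanSpace.equiv (Fin d) ℝ).symm fun i => (z i : ℝ)

/-- An element of `M` is integer-valued (i.e. belongs to `L²_ℤ`) if a.e. its values are
integer vectors. -/
def IsIntegerValued {d : ℕ} (z : Mspace d) : Prop :=
  ∀ᵐ x ∂(cubeMeasure d), ∃ k : Fin d → ℤ, z x = intVec k

/-- The group `H` of invertible bi-measurable maps of `[0,1)^d` preserving Lebesgue measure. -/
structure CubeAuto (d : ℕ) where
  toFun : Rd d → Rd d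
  invFun : Rd d → Rd d
  measurable_toFun : Measurable toFun
  measurable_invFun : Measurable invFun
  mapsTo : MapsTo toFun (cube d) (cube d)
  mapsTo_inv : MapsTo invFun (cube d) (cube d)
  leftInv : ∀ x ∈ cube d, invFun (toFun x) = x
  rightInv : ∀ x ∈ cube d, toFun (invFun x) = x
  measurePreserving : MeasurePreserving toFun (cubeMeasure d) (cubeMeasure d)

/-- Composition `ψ ∘ h` as an element of `M`. -/
def Mcomp {d : ℕ} (ψ : Mspace d) (h : CubeAuto d) : Mspace d :=
  Lp.compMeasurePreserving h.toFun h.measurePreserving ψ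

/-- `ℤ^d`-periodicity of a function on `ℝ^d`. -/
def IsPeriodicRd {d : ℕ} (f : Rd d → ℝ) : Prop :=
  ∀ (x : Rd d) (z : Fin d → ℤ), f (x + intVec z) = f x


/-- The data of the problem: a potential `φ` and final conditions `U⁰, U¹`, all of class `C³`
on the torus (i.e. `ℤ^d`-periodic on `ℝ^d`), with `φ` and `U¹` even. -/
structure GoodData (d : ℕ) where
  φ : Rd d → ℝ
  U0 : Rd d → ℝ
  U1 : Rd d → ℝ
  φ_smooth : ContDiff ℝ 3 φ
  U0_smooth : ContDiff ℝ 3 U0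
  U1_smooth : ContDiff ℝ 3 U1
  φ_periodic : IsPeriodicRd φ
  U0_periodic : IsPeriodicRd U0
  U1_periodic : IsPeriodicRd U1
  φ_even : ∀ x, φ (-x) = φ x
  U1_even : ∀ x, U1 (-x) = U1 x

/-- `𝓕̂(σ) = ½ ∫∫ φ(σ(x) − σ(y)) dx dy`. -/
def Fcal {d : ℕ} (D : GoodData d) (σ : Mspace d) : ℝ :=
  (1/2) * ∫ x, (∫ y, D.φ (σ x - σ y) ∂(cubeMeasure d)) ∂(cubeMeasure d)

/-- `𝓤̂₀(σ) = ∫∫ [U⁰(σ(x)) + ½U¹(σ(x)−σ(y))] dx dy`. -/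
def U0cal {d : ℕ} (D : GoodData d) (σ : Mspace d) : ℝ :=
  ∫ x, (D.U0 (σ x) + (1/2) * ∫ y, D.U1 (σ x - σ y) ∂(cubeMeasure d)) ∂(cubeMeasure d)

/-- `F̂(q,σ) = ∫ φ(q − σ(x)) dx`. -/
def Fhat {d : ℕ} (D : GoodData d) (q : Rd d) (σ : Mspace d) : ℝ :=
  ∫ x, D.φ (q - σ x) ∂(cubeMeasure d)

/-- `û₀(q,σ) = U⁰(q) + ∫ U¹(q − σ(x)) dx`. -/
def u0hat {d : ℕ} (D : GoodData d) (q : Rd d) (σ : Mspace d) : ℝ :=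
  D.U0 q + ∫ x, D.U1 (q - σ x) ∂(cubeMeasure d)

/-- Absolutely continuous curves `[a,b] → E` with square-integrable derivative `σ'`. -/
def IsACOn {E : Type*} [NormedAddCommGroup E] [NormedSpace ℝ E] [CompleteSpace E]
    (a b : ℝ) (σ σ' : ℝ → E) : Prop :=
  IntervalIntegrable σ' volume a b ∧
  IntervalIntegrable (fun s => ‖σ' s‖ ^ 2) volume a b ∧
  ∀ s ∈ Icc a b, σ s = σ a + ∫ u in a..s, σ' u

/-- The augmented action of a curve `σ` (with derivative `σ'`) on `[t,0]`. -/
def action {d : ℕ} (D : GoodData d) (t : ℝ) (σ σ' : ℝ → Mspace d) : ℝ :=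
  (∫ s in t..0, ((1:ℝ)/2 * ‖σ' s‖ ^ 2 - Fcal D (σ s))) + U0cal D (σ 0)

/-- The value function `𝓤̂(t,ψ)` on parametrizations. -/
def Uhat {d : ℕ} (D : GoodData d) (t : ℝ) (ψ : Mspace d) : ℝ :=
  sInf {A | ∃ σ σ' : ℝ → Mspace d, IsACOn t 0 σ σ' ∧ σ t = ψ ∧ A = action D t σ σ'}

/-- `σ` (with derivative `σ'`) minimizes the augmented action on `[t,0]` among absolutely
continuous curves starting at `ψ` at time `t`. -/
def IsMinimizer {d : ℕ} (D : GoodData d) (t : ℝ) (ψ : Mspace d) (σ σ' : ℝ → Mspace d) : Prop :=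
  IsACOn t 0 σ σ' ∧ σ t = ψ ∧
  ∀ η η' : ℝ → Mspace d, IsACOn t 0 η η' → η t = ψ →
    action D t σ σ' ≤ action D t η η'


/-- Encoding of the Hilbert space `H¹_M(−T,0)` as the (isometric) product `M × L²((−T,0),M)`:
an `H¹` curve corresponds to the pair (initial value, derivative), and the `H¹` norm
`‖σ_{−T}‖² + ∫‖σ̇‖²` is exactly the product Hilbert norm squared. -/
abbrev H1space (d : ℕ) (T : ℝ) :=
  Mspace d × (Lp (α := ℝ) (Mspace d) 2 (volume.restrict (Ioc (-T) (0:ℝ))))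

/-- The `d`-dimensional torus `𝕋^d = ℝ^d/ℤ^d`. -/
abbrev Td (d : ℕ) := Fin d → AddCircle (1:ℝ)

/-- The natural projection `π : ℝ^d → 𝕋^d`. -/
def torusProj {d : ℕ} (v : Rd d) : Td d := fun i => (v i : AddCircle (1:ℝ))

/-- The canonical lift `𝕋^d → [0,1)^d ⊆ ℝ^d`. -/
def liftTd {d : ℕ} (q : Td d) : Rd d :=
  (EuclideanSpace.equiv (Fin d) ℝ).symm fun i => ((AddCircle.equivIco 1 0 (q i) : Ico (0:ℝ) (0+1)) : ℝ)

/-- The law on `𝕋^d` of a parametrization `ψ ∈ M`, i.e. `(π∘ψ)_♯𝓛^d`. -/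
def lawTd {d : ℕ} (ψ : Mspace d) : Measure (Td d) :=
  (cubeMeasure d).map fun x => torusProj (ψ x)

/-- A Borel probability measure on `ℝ^d` with finite second moment, i.e. a member of `𝓟₂(ℝ^d)`. -/
def IsProb2 {d : ℕ} (μ : Measure (Rd d)) : Prop :=
  IsProbabilityMeasure μ ∧ Integrable (fun x => ‖x‖ ^ 2) μ

/-- `γ ∈ Γ(μ₁,μ₂)`: a coupling of `μ₁` and `μ₂`. -/
def IsCoupling {d : ℕ} (γ : Measure (Rd d × Rd d)) (μ₁ μ₂ : Measure (Rd d)) : Prop :=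
  IsProbabilityMeasure γ ∧ γ.map Prod.fst = μ₁ ∧ γ.map Prod.snd = μ₂

/-- Weak* convergence of a sequence of measures, tested against bounded continuous functions. -/
def TendstoWeakStar {X : Type*} [TopologicalSpace X] [MeasurableSpace X]
    (γn : ℕ → Measure X) (γ : Measure X) : Prop :=
  ∀ f : BoundedContinuousFunction X ℝ,
    Tendsto (fun n => ∫ x, f x ∂(γn n)) atTop (𝓝 (∫ x, f x ∂γ))

/-- The squared `2`-Wasserstein distance on `𝓟₂(ℝ^d)`. -/
def W2sq {d : ℕ} (μ₁ μ₂ : Measure (Rd d)) : ℝ :=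
  sInf {c | ∃ γ : Measure (Rd d × Rd d), IsCoupling γ μ₁ μ₂ ∧ c = ∫ p, ‖p.1 - p.2‖ ^ 2 ∂γ}

/-- `γ ∈ Ψ(μ₁,μ₂)` for measures on the torus: a probability measure on `𝕋^d × ℝ^d` with finite
second moment whose first projection pushes to `μ₁` and `(x,v) ↦ x + π(v)` pushes to `μ₂`. -/
def IsTransferTd {d : ℕ} (γ : Measure (Td d × Rd d)) (μ₁ μ₂ : Measure (Td d)) : Prop :=
  IsProbabilityMeasure γ ∧ Integrable (fun p => ‖p.2‖ ^ 2) γ ∧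
  γ.map Prod.fst = μ₁ ∧ γ.map (fun p => p.1 + torusProj p.2) = μ₂

/-- `γ ∈ Ψ(μ₁,μ₂)` for measures on `ℝ^d`. -/
def IsTransferRd {d : ℕ} (γ : Measure (Rd d × Rd d)) (μ₁ μ₂ : Measure (Rd d)) : Prop :=
  IsProbabilityMeasure γ ∧ Integrable (fun p => ‖p.2‖ ^ 2) γ ∧
  γ.map Prod.fst = μ₁ ∧ γ.map (fun p => p.1 + p.2) = μ₂

/-- Strong differentiability of `G : 𝓟(𝕋^d) → ℝ` at `μ` with strong derivative `ξ`. -/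
def HasStrongDerivTd {d : ℕ} (G : Measure (Td d) → ℝ) (μ : Measure (Td d))
    (ξ : Td d → Rd d) : Prop :=
  MemLp ξ 2 μ ∧ ∃ k > (0:ℝ), ∀ ν : Measure (Td d), IsProbabilityMeasure ν →
    ∀ γ : Measure (Td d × Rd d), IsTransferTd γ μ ν →
      abs (G ν - G μ - ∫ p, ⟪ξ p.1, p.2⟫ ∂γ) ≤ k * ∫ p, ‖p.2‖ ^ 2 ∂γ

/-- Strong differentiability of `Ḡ : 𝓟₂(ℝ^d) → ℝ` at `μ` with strong derivative `ξ`. -/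
def HasStrongDerivRd {d : ℕ} (G : Measure (Rd d) → ℝ) (μ : Measure (Rd d))
    (ξ : Rd d → Rd d) : Prop :=
  MemLp ξ 2 μ ∧ ∃ k > (0:ℝ), ∀ ν : Measure (Rd d), IsProb2 ν →
    ∀ γ : Measure (Rd d × Rd d), IsTransferRd γ μ ν →
      abs (G ν - G μ - ∫ p, ⟪ξ p.1, p.2⟫ ∂γ) ≤ k * ∫ p, ‖p.2‖ ^ 2 ∂γ

/-- The one-particle action, given the motion `pack` of the whole community. -/
def oneAction {d : ℕ} (D : GoodData d) (t : ℝ) (pack : ℝ → Mspace d) (y y' : ℝ → Rd d) : ℝ :=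
  (∫ s in t..0, ((1:ℝ)/2 * ‖y' s‖ ^ 2 - Fhat D (y s) (pack s))) + u0hat D (y 0) (pack 0)

/-- The one-particle value function, given the motion `pack` of the whole community.
Curves on the torus are identified with their lifts to `ℝ^d`, the integrand being
`ℤ^d`-periodic in the space variable. -/
def uval {d : ℕ} (D : GoodData d) (pack : ℝ → Mspace d) (t : ℝ) (x : Rd d) : ℝ :=
  sInf {A | ∃ y y' : ℝ → Rd d, IsACOn t 0 y y' ∧ y t = x ∧ A = oneAction D t pack y y'}

/-- The one-particle minimality predicate. -/
def IsOneMinimizer {d : ℕ} (D : GoodData d) (t : ℝ) (pack : ℝ → Mspace d) (x : Rd d)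
    (y y' : ℝ → Rd d) : Prop :=
  IsACOn t 0 y y' ∧ y t = x ∧
  ∀ z z' : ℝ → Rd d, IsACOn t 0 z z' → z t = x →
    oneAction D t pack y y' ≤ oneAction D t pack z z'

/-- `σ` (of class `C¹` on `[−T,0]`, with derivatives `σ', σ''`) solves the Euler–Lagrange
system (3.9): `σ̈ₛ(x) = −∇F̂(σₛ(x),σₛ)`, `σ_t = ψ`, `σ̇₀(x) = −∇û₀(σ₀(x),σ₀)`. -/
def SolvesEL {d : ℕ} (D : GoodData d) (T t : ℝ) (ψ : Mspace d) (σ σ' σ'' : ℝ → Mspace d) : Prop :=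
  (∀ s ∈ Icc (-T) (0:ℝ), HasDerivWithinAt σ (σ' s) (Icc (-T) 0) s) ∧
  (∀ s ∈ Icc (-T) (0:ℝ), HasDerivWithinAt σ' (σ'' s) (Icc (-T) 0) s) ∧
  (∀ s ∈ Icc (-T) (0:ℝ), ∀ᵐ x ∂(cubeMeasure d),
    (σ'' s) x = - gradient (fun q => Fhat D q (σ s)) ((σ s) x)) ∧
  σ t = ψ ∧
  (∀ᵐ x ∂(cubeMeasure d), (σ' 0) x = - gradient (fun q => u0hat D q (σ 0)) ((σ 0) x))

/-- The weak formulation of the continuity equation `∂ₛμₛ + div(X μₛ) = 0` on `(t,0) × 𝕋^d`,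
tested against smooth functions, compactly supported in time, identified with their
`ℤ^d`-periodic lifts in the space variable. -/
def IsWeakSolutionCE {d : ℕ} (t : ℝ) (μ : ℝ → Measure (Td d)) (X : ℝ → Td d → Rd d) : Prop :=
  ∀ f : ℝ × Rd d → ℝ, ContDiff ℝ (⊤ : ℕ∞) f →
    (∀ (s : ℝ) (v : Rd d) (z : Fin d → ℤ), f (s, v + intVec z) = f (s, v)) →
    (∃ a b : ℝ, t < a ∧ a ≤ b ∧ b < 0 ∧ ∀ s, s ∉ Icc a b → ∀ v, f (s, v) = 0) →
    ∫ s in t..0, ∫ q, (deriv (fun τ => f (τ, liftTd q)) s +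
      ⟪gradient (fun v => f (s, v)) (liftTd q), X s q⟫) ∂(μ s) = 0

/-- `𝓕(μ) = ½∫∫ φ(z−z′) dμ dμ` on `𝓟(𝕋^d)`. -/
def FcalMeas {d : ℕ} (D : GoodData d) (μ : Measure (Td d)) : ℝ :=
  (1/2) * ∫ z, (∫ z', D.φ (liftTd z - liftTd z') ∂μ) ∂μ

/-- `𝓤₀(μ) = ∫∫ [U⁰(z) + ½U¹(z−z′)] dμ dμ` on `𝓟(𝕋^d)`. -/
def U0calMeas {d : ℕ} (D : GoodData d) (μ : Measure (Td d)) : ℝ :=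
  ∫ z, (D.U0 (liftTd z) + (1/2) * ∫ z', D.U1 (liftTd z - liftTd z') ∂μ) ∂μ

/-- The value function `𝓤(t,μ̄)` on measures. -/
def UcalMeas {d : ℕ} (D : GoodData d) (t : ℝ) (μbar : Measure (Td d)) : ℝ :=
  sInf {A | ∃ (μ : ℝ → Measure (Td d)) (X : ℝ → Td d → Rd d),
    (∀ s, IsProbabilityMeasure (μ s)) ∧
    IsWeakSolutionCE t μ X ∧ μ t = μbar ∧
    IntervalIntegrable (fun s => ∫ q, ‖X s q‖ ^ 2 ∂(μ s)) volume t 0 ∧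
    A = (∫ s in t..0, ((1:ℝ)/2 * ∫ q, ‖X s q‖ ^ 2 ∂(μ s) - FcalMeas D (μ s))) +
      U0calMeas D (μ 0)}


/-- Encoding of the Hilbert space `H¹_M(t,0)` as the isometric product `M × L²((t,0),M)`:
an `H¹` curve corresponds to the pair (initial value, derivative), the `H¹` norm
`‖σ_t‖²_M + ∫_t^0 ‖σ̇_s‖²_M ds` being exactly the product Hilbert norm squared. -/
abbrev H1on (d : ℕ) (t : ℝ) :=
  Mspace d × (Lp (α := ℝ) (Mspace d) 2 (volume.restrict (Ioc t (0:ℝ))))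

/-- The curve associated to an element of `H¹_M(t,0)`: `σ_s = σ_t + ∫_t^s σ̇_u du`. -/
def curveOf {d : ℕ} (t : ℝ) (p : H1on d t) : ℝ → Mspace d :=
  fun s => p.1 + ∫ u in t..s, p.2 u

/-- The augmented action as a functional on `H¹_M(t,0)`. -/
def Ifun {d : ℕ} (D : GoodData d) (t : ℝ) (p : H1on d t) : ℝ :=
  (∫ s in t..0, ((1:ℝ)/2 * ‖(p.2 : ℝ → Mspace d) s‖ ^ 2 - Fcal D (curveOf t p s)))
    + U0cal D (curveOf t p 0)



/-! ### Auxiliary lemmas for Statement 11 -/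

section Aux11

lemma torusProj_add' {d : ℕ} (v w : Rd d) :
    torusProj (v + w) = torusProj v + torusProj w := by
  funext i
  show (((v + w) i : ℝ) : AddCircle (1:ℝ)) = _
  have : (v + w) i = v i + w i := rfl
  rw [this, AddCircle.coe_add]
  rfl

lemma torusProj_intVec' {d : ℕ} (k : Fin d → ℤ) : torusProj (intVec k) = 0 := by
  funext i
  show (((intVec k) i : ℝ) : AddCircle (1:ℝ)) = 0
  have : (intVec k) i = (k i : ℝ) := rfl
  rw [this, AddCircle.coe_eq_zero_iff]
  exact ⟨k i, by simp⟩

lemma continuous_torusProj' {d : ℕ} : Continuous (torusProj (d := d)) :=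
  continuous_pi fun i => continuous_quotient_mk'.comp (PiLp.continuous_apply 2 _ i)

lemma measurable_torusProj' {d : ℕ} : Measurable (torusProj (d := d)) :=
  continuous_torusProj'.measurable

instance cubeMeasure_prob (d : ℕ) : IsProbabilityMeasure (cubeMeasure d) := by
  constructor
  rw [cubeMeasure, Measure.restrict_apply_univ]
  have h := EuclideanSpace.volume_preserving_symm_measurableEquiv_toLp (Fin d)
  have hs : MeasurableSet (Set.univ.pi fun _ : Fin d => Ico (0:ℝ) 1) :=
    MeasurableSet.univ_pi fun _ => measurableSet_Ico
  have hpre : (MeasurableEquiv.toLp 2 (Fin d → ℝ)).symm ⁻¹' (Set.univ.pi fun _ => Ico (0:ℝ) 1)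
      = cube d := by
    ext x
    simp [Set.mem_pi, Ico, cube]
  rw [← hpre, h.measure_preimage hs.nullMeasurableSet, volume_pi_pi]
  simp

variable {d : ℕ} {G : Measure (Td d) → ℝ} {μt : Measure (Td d)} {ξt : Td d → Rd d}
  {σ₀ : Mspace d}

lemma aem_tp (σ₀ : Mspace d) :
    AEMeasurable (fun x => torusProj (σ₀ x)) (cubeMeasure d) :=
  (continuous_torusProj'.comp_aestronglyMeasurable (Lp.aestronglyMeasurable σ₀)).aemeasurable

lemma memV (hG : HasStrongDerivTd G μt ξt) (hlaw : lawTd σ₀ = μt) :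
    MemLp (fun x => ξt (torusProj (σ₀ x))) 2 (cubeMeasure d) := by
  have h1 : MemLp ξt 2 ((cubeMeasure d).map fun x => torusProj (σ₀ x)) := by
    rw [show ((cubeMeasure d).map fun x => torusProj (σ₀ x)) = μt from hlaw]
    exact hG.1
  exact (memLp_map_measure_iff h1.aestronglyMeasurable (aem_tp σ₀)).mp h1

lemma integral_norm_sq (w : Mspace d) : ∫ x, ‖w x‖ ^ 2 ∂(cubeMeasure d) = ‖w‖ ^ 2 := by
  have h : ⟪w, w⟫ = ∫ x, ⟪w x, w x⟫ ∂(cubeMeasure d) := L2.inner_def w w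
  rw [real_inner_self_eq_norm_sq] at h
  rw [h]
  exact integral_congr_ae (Eventually.of_forall fun x => (real_inner_self_eq_norm_sq _).symm)

lemma key_estimate (hG : HasStrongDerivTd G μt ξt) (hlaw : lawTd σ₀ = μt)
    {k : ℝ} (hk : 0 < k)
    (hineq : ∀ ν : Measure (Td d), IsProbabilityMeasure ν →
      ∀ γ : Measure (Td d × Rd d), IsTransferTd γ μt ν →
        abs (G ν - G μt - ∫ p, ⟪ξt p.1, p.2⟫ ∂γ) ≤ k * ∫ p, ‖p.2‖ ^ 2 ∂γ)
    (η : Mspace d) :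
    |G (lawTd η) - G (lawTd σ₀) -
      ⟪(memV hG hlaw).toLp _, η - σ₀⟫| ≤ k * ‖η - σ₀‖ ^ 2 := by
  classical
  set w : Mspace d := η - σ₀ with hw
  set T : Rd d → Td d × Rd d := fun x => (torusProj (σ₀ x), w x) with hT
  have haeT : AEMeasurable T (cubeMeasure d) :=
    (aem_tp σ₀).prodMk (Lp.aestronglyMeasurable w).aemeasurable
  set γ : Measure (Td d × Rd d) := (cubeMeasure d).map T with hγ
  have hfst : γ.map Prod.fst = μt := by
    rw [hγ, AEMeasurable.map_map_of_aemeasurable measurable_fst.aemeasurable haeT]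
    exact hlaw
  have hwae : (fun x => (w : Rd d → Rd d) x) =ᵐ[cubeMeasure d] fun x => η x - σ₀ x := by
    filter_upwards [Lp.coeFn_sub η σ₀] with x hx using hx
  have hg : Measurable (fun p : Td d × Rd d => p.1 + torusProj p.2) :=
    measurable_fst.add (measurable_torusProj'.comp measurable_snd)
  have hsnd : γ.map (fun p => p.1 + torusProj p.2) = lawTd η := by
    rw [hγ, AEMeasurable.map_map_of_aemeasurable hg.aemeasurable haeT]
    refine Measure.map_congr ?_
    filter_upwards [hwae] with x hx
    show torusProj (σ₀ x) + torusProj (w x) = torusProj (η x)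
    rw [hx, ← torusProj_add', add_sub_cancel]
  have hprobγ : IsProbabilityMeasure γ := Measure.isProbabilityMeasure_map haeT
  have hw2 : Integrable (fun x => ‖w x‖ ^ 2) (cubeMeasure d) := by
    have := (Lp.memLp w).integrable_norm_rpow (by norm_num) (by norm_num)
    refine this.congr (Eventually.of_forall fun x => ?_)
    norm_num
  have hsm2 : AEStronglyMeasurable (fun p : Td d × Rd d => ‖p.2‖ ^ 2) γ :=
    (continuous_snd.norm.pow 2).aestronglyMeasurable
  have hint2 : Integrable (fun p : Td d × Rd d => ‖p.2‖ ^ 2) γ := by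
    rw [hγ, integrable_map_measure hsm2 haeT]
    exact hw2
  have htransfer : IsTransferTd γ μt (lawTd η) := ⟨hprobγ, hint2, hfst, hsnd⟩
  have hprobη : IsProbabilityMeasure (lawTd η) :=
    Measure.isProbabilityMeasure_map (aem_tp η)
  have hmain := hineq (lawTd η) hprobη γ htransfer
  have hξsm : AEStronglyMeasurable (fun p : Td d × Rd d => ξt p.1) γ := by
    have : AEStronglyMeasurable ξt (γ.map Prod.fst) := by
      rw [hfst]; exact hG.1.aestronglyMeasurable
    exact this.comp_aemeasurable measurable_fst.aemeasurable
  have hinnersm : AEStronglyMeasurable (fun p : Td d × Rd d => ⟪ξt p.1, p.2⟫) γ :=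
    hξsm.inner continuous_snd.aestronglyMeasurable
  have hI1 : ∫ p, ⟪ξt p.1, p.2⟫ ∂γ
      = ∫ x, ⟪ξt (torusProj (σ₀ x)), w x⟫ ∂(cubeMeasure d) := by
    rw [hγ, integral_map haeT (by rw [← hγ]; exact hinnersm)]
  have hI2 : ∫ p, ‖p.2‖ ^ 2 ∂γ = ∫ x, ‖w x‖ ^ 2 ∂(cubeMeasure d) := by
    rw [hγ, integral_map haeT (by rw [← hγ]; exact hsm2)]
  have hinner : ⟪(memV hG hlaw).toLp _, w⟫
      = ∫ x, ⟪ξt (torusProj (σ₀ x)), w x⟫ ∂(cubeMeasure d) := by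
    rw [L2.inner_def]
    refine integral_congr_ae ?_
    filter_upwards [(memV hG hlaw).coeFn_toLp] with x hx
    rw [hx]
  rw [hI1, hI2, integral_norm_sq] at hmain
  rw [hlaw, hinner]
  exact hmain

lemma key_gradient (hG : HasStrongDerivTd G μt ξt) (hlaw : lawTd σ₀ = μt) :
    HasGradientAt (fun η : Mspace d => G (lawTd η)) ((memV hG hlaw).toLp _) σ₀ := by
  obtain ⟨k, hk, hineq⟩ := hG.2
  rw [hasGradientAt_iff_hasFDerivAt, hasFDerivAt_iff_isLittleO_nhds_zero]
  have hbound : ∀ w : Mspace d,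
      ‖G (lawTd (σ₀ + w)) - G (lawTd σ₀) -
        (InnerProductSpace.toDual ℝ (Mspace d) ((memV hG hlaw).toLp _)) w‖ ≤ k * ‖w‖ ^ 2 := by
    intro w
    have h := key_estimate hG hlaw hk hineq (σ₀ + w)
    rw [add_sub_cancel_left] at h
    rw [Real.norm_eq_abs, InnerProductSpace.toDual_apply_apply]
    exact h
  refine Asymptotics.isLittleO_iff.mpr ?_
  intro c hc
  have hball : ∀ᶠ w : Mspace d in 𝓝 0, ‖w‖ ≤ c / k := by
    filter_upwards [Metric.closedBall_mem_nhds (0 : Mspace d) (div_pos hc hk)] with w hw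
    simpa [dist_zero_right] using Metric.mem_closedBall.mp hw
  filter_upwards [hball] with w hw
  calc ‖G (lawTd (σ₀ + w)) - G (lawTd σ₀) -
        (InnerProductSpace.toDual ℝ (Mspace d) ((memV hG hlaw).toLp _)) w‖
      ≤ k * ‖w‖ ^ 2 := hbound w
    _ ≤ c * ‖w‖ := by nlinarith [(le_div_iff₀ hk).mp hw, norm_nonneg w]

end Aux11

/-- Let `G : 𝓟(𝕋^d) → ℝ` be strongly differentiable at `μ̃`, let `μ ∈ 𝓟₂(ℝ^d)`
with `π_♯μ = μ̃`, and let `ψ ∈ M` with `ψ_♯𝓛^d = μ`. Then `Ĝ(η) := G(π_♯ η_♯ 𝓛^d)` is (Fréchet)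
differentiable at `ψ∘h + z` for all `(h,z) ∈ H × L²_ℤ`, and `DĜ(ψ∘h+z) = DĜ(ψ)∘h`. -/
theorem derivative_of_lifted_functional_equivariant (d : ℕ)
    (G : Measure (Td d) → ℝ) (μt : Measure (Td d)) (hμt : IsProbabilityMeasure μt)
    (ξt : Td d → Rd d) (hG : HasStrongDerivTd G μt ξt)
    (μ : Measure (Rd d)) (hμ : IsProb2 μ) (hproj : μ.map torusProj = μt)
    (ψ : Mspace d) (hψ : (cubeMeasure d).map (fun x => ψ x) = μ) :
    ∀ (h : CubeAuto d) (z : Mspace d), IsIntegerValued z →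
      DifferentiableAt ℝ (fun η : Mspace d => G (lawTd η)) (Mcomp ψ h + z) ∧
      ∀ᵐ x ∂(cubeMeasure d),
        (gradient (fun η : Mspace d => G (lawTd η)) (Mcomp ψ h + z)) x
          = (gradient (fun η : Mspace d => G (lawTd η)) ψ) (h.toFun x) := by
  intro h z hz
  set f : Mspace d → ℝ := fun η => G (lawTd η) with hf
  -- law of ψ is μt
  have hψaem : AEMeasurable (fun x => ψ x) (cubeMeasure d) :=
    (Lp.aestronglyMeasurable ψ).aemeasurable
  have hlawψ : lawTd ψ = μt := by
    have h1 : ((cubeMeasure d).map fun x => ψ x).map torusProj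
        = (cubeMeasure d).map (torusProj ∘ fun x => ψ x) :=
      AEMeasurable.map_map_of_aemeasurable measurable_torusProj'.aemeasurable hψaem
    rw [hψ] at h1
    rw [lawTd, show (fun x => torusProj (ψ x)) = torusProj ∘ fun x => ψ x from rfl, ← h1,
      hproj]
  -- the point σ₀
  set σ₀ : Mspace d := Mcomp ψ h + z with hσ₀
  have hσ₀ae : (fun x => σ₀ x) =ᵐ[cubeMeasure d] fun x => ψ (h.toFun x) + z x := by
    filter_upwards [Lp.coeFn_add (Mcomp ψ h) z,
      Lp.coeFn_compMeasurePreserving ψ h.measurePreserving] with x hx1 hx2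
    rw [hσ₀, hx1]
    show Mcomp ψ h x + z x = _
    rw [show Mcomp ψ h x = ψ (h.toFun x) from hx2]
  have htσ₀ae : (fun x => torusProj (σ₀ x)) =ᵐ[cubeMeasure d]
      fun x => torusProj (ψ (h.toFun x)) := by
    filter_upwards [hσ₀ae, hz] with x hx1 hx2
    obtain ⟨k, hk⟩ := hx2
    rw [hx1, hk, torusProj_add', torusProj_intVec', add_zero]
  have hlawσ₀ : lawTd σ₀ = μt := by
    rw [lawTd, Measure.map_congr htσ₀ae]
    have h1 : ((cubeMeasure d).map h.toFun).map (fun x => torusProj (ψ x))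
        = (cubeMeasure d).map ((fun x => torusProj (ψ x)) ∘ h.toFun) := by
      refine AEMeasurable.map_map_of_aemeasurable ?_ h.measurable_toFun.aemeasurable
      rw [h.measurePreserving.map_eq]
      exact aem_tp ψ
    rw [h.measurePreserving.map_eq] at h1
    have h2 : (fun x => torusProj (ψ (h.toFun x)))
        = (fun x => torusProj (ψ x)) ∘ h.toFun := rfl
    rw [h2, ← h1]
    exact hlawψ
  -- gradients
  have hgradσ₀ := key_gradient hG hlawσ₀
  have hgradψ := key_gradient hG hlawψ
  refine ⟨(hasGradientAt_iff_hasFDerivAt.mp hgradσ₀).differentiableAt, ?_⟩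
  have heqσ₀ : gradient f σ₀ = (memV hG hlawσ₀).toLp _ := hgradσ₀.gradient
  have heqψ : gradient f ψ = (memV hG hlawψ).toLp _ := hgradψ.gradient
  have hcomp : (fun x => (gradient f ψ) (h.toFun x)) =ᵐ[cubeMeasure d]
      fun x => ξt (torusProj (ψ (h.toFun x))) := by
    have hae : (fun y => (gradient f ψ) y)
        =ᵐ[(cubeMeasure d).map h.toFun] fun y => ξt (torusProj (ψ y)) := by
      rw [h.measurePreserving.map_eq, heqψ]
      exact (memV hG hlawψ).coeFn_toLp
    exact ae_eq_comp h.measurable_toFun.aemeasurable hae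
  filter_upwards [(by rw [heqσ₀]; exact (memV hG hlawσ₀).coeFn_toLp :
      (fun x => (gradient f σ₀) x) =ᵐ[cubeMeasure d] fun x => ξt (torusProj (σ₀ x))), htσ₀ae, hcomp] with x hx1 hx2 hx3
  rw [hx1, hx2, ← hx3]

end MFG
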